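/- Error bound for the calculus quotient approximation: under the hypotheses that f, g are C³ on B(x⁰, Δ̄) with Hessian Lipschitz constants L_f, L_g, g(x⁰) ≠ 0, X has radius Δ < Δ̄, S has full rank, and U = span S, the approximation ∇ᶜᶜ(f/g)(X) := (g(x⁰)∇ᶜf(X) − f(x⁰)∇ᶜg(X))/g(x⁰)² satisfies ‖∇ᶜᶜ(f/g)(X) − ∇(f/g)_U(x⁰)‖ ≤ (√m/6)(L_f/|g(x⁰)| + L_g|f(x⁰)|/g(x⁰)²)‖(Ŝᵀ)†‖Δ². -/

import Mathlib

/-!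
By the quotient rule the error vector is `P *ᵥ w` with
`wᵢ = (g(x⁰) εᵢ(f) - f(x⁰) εᵢ(g)) / g(x⁰)²`, where `εᵢ(h) = (h(x⁰ + dᵢ) - h(x⁰ - dᵢ))/2 - Dh(x⁰) dᵢ`
is the error of a centred difference. In `h(x⁰ + y) - h(x⁰ - y) - 2 Dh(x⁰) y` the even-order terms
cancel: its derivative `Dh(x⁰ + y) + Dh(x⁰ - y) - 2 Dh(x⁰)` has a derivative bounded by `2 L_h ‖y‖`,
and integrating twice along rays gives `|εᵢ(h)| ≤ L_h ‖dᵢ‖³ / 6`. Finally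
`‖P w‖ ≤ ‖P‖ ‖w‖ ≤ ‖P‖ √m maxᵢ |wᵢ|`.
-/

open Metric Matrix Set

/-- `B` is the Moore–Penrose pseudoinverse of `A`: the four Penrose equations. -/
def IsMPInv {n m : Type*} [Fintype n] [Fintype m]
    (A : Matrix n m ℝ) (B : Matrix m n ℝ) : Prop :=
  A * B * A = A ∧ B * A * B = B ∧ (A * B)ᵀ = A * B ∧ (B * A)ᵀ = B * A

/-- The ℓ²→ℓ² operator (spectral) norm of a real matrix. -/
noncomputable def opNorm {a b : ℕ} (A : Matrix (Fin a) (Fin b) ℝ) : ℝ :=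
  ‖LinearMap.toContinuousLinearMap (Matrix.toEuclideanLin A)‖

theorem sub_mem_ball_iff_norm {E : Type*} [SeminormedAddCommGroup E] {x y : E} {r : ℝ} :
    x - y ∈ ball x r ↔ ‖y‖ < r := by
  rw [sub_eq_add_neg, add_mem_ball_iff_norm, norm_neg]

theorem nonneg_of_norm_sub_le_mul_norm_sub {E F : Type*} [NormedAddCommGroup E] [NormedSpace ℝ E]
    [Nontrivial E] [SeminormedAddCommGroup F] {φ : E → F} {x : E} {r L : ℝ}
    (hr : 0 < r) (hL : ∀ y ∈ ball x r, ∀ z ∈ ball x r, ‖φ y - φ z‖ ≤ L * ‖y - z‖) : 0 ≤ L := by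
  obtain ⟨v, hv⟩ := exists_norm_eq E (half_pos hr).le
  have hxv : x + v ∈ ball x r := by simpa [mem_ball_iff_norm, hv] using half_lt_self hr
  have := (norm_nonneg _).trans (hL _ hxv x (mem_ball_self hr))
  rw [add_sub_cancel_left, hv] at this
  exact nonneg_of_mul_nonneg_left this (half_pos hr)

section Calculus

variable {E F : Type*} [NormedAddCommGroup E] [NormedSpace ℝ E] [NormedAddCommGroup F]
  [NormedSpace ℝ F]

theorem norm_le_of_norm_fderiv_le_mul_pow {s : Set E} (hs : StarConvex ℝ 0 s) {φ : E → F}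
    {φ' : E → E →L[ℝ] F} {C : ℝ} {k : ℕ} (hφ : ∀ y ∈ s, HasFDerivAt φ (φ' y) y) (hφ0 : φ 0 = 0)
    (hφ' : ∀ y ∈ s, ‖φ' y‖ ≤ C * ‖y‖ ^ k) {y : E} (hy : y ∈ s) :
    ‖φ y‖ ≤ C * ‖y‖ ^ (k + 1) / (k + 1) := by
  have hseg : ∀ t ∈ Icc (0 : ℝ) 1, t • y ∈ s := fun t ht => hs.smul_mem hy ht.1 ht.2
  have hline : ∀ t ∈ Icc (0 : ℝ) 1, HasDerivAt (fun t : ℝ => φ (t • y)) (φ' (t • y) y) t :=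
    fun t ht => (hφ _ (hseg t ht)).comp_hasDerivAt t (by simpa using (hasDerivAt_id t).smul_const y)
  have hB : ∀ t : ℝ, HasDerivAt (fun t => C * ‖y‖ ^ (k + 1) * t ^ (k + 1) / (k + 1))
      (C * ‖y‖ ^ (k + 1) * t ^ k) t := fun t => by
    refine (((hasDerivAt_pow (k + 1) t).const_mul (C * ‖y‖ ^ (k + 1))).div_const
      ((k : ℝ) + 1)).congr_deriv ?_
    rw [Nat.add_sub_cancel]
    push_cast
    field_simp
  have hbound : ∀ t ∈ Ico (0 : ℝ) 1, ‖φ' (t • y) y‖ ≤ C * ‖y‖ ^ (k + 1) * t ^ k := fun t ht =>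
    calc ‖φ' (t • y) y‖ ≤ ‖φ' (t • y)‖ * ‖y‖ := (φ' (t • y)).le_opNorm y
      _ ≤ C * ‖t • y‖ ^ k * ‖y‖ := by gcongr; exact hφ' _ (hseg t (Ico_subset_Icc_self ht))
      _ = C * ‖y‖ ^ (k + 1) * t ^ k := by rw [norm_smul, Real.norm_of_nonneg ht.1]; ring
  simpa using image_norm_le_of_norm_deriv_right_le_deriv_boundary
    (fun t ht => (hline t ht).continuousAt.continuousWithinAt)
    (fun t ht => (hline t (Ico_subset_Icc_self ht)).hasDerivWithinAt) (by simp [hφ0]) hB hbound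
    (right_mem_Icc.2 zero_le_one)

variable {h : E → F} {x : E} {r L : ℝ}

theorem norm_fderiv_add_add_fderiv_sub_sub_le (hh : ContDiffOn ℝ 2 h (ball x r))
    (hL : ∀ y ∈ ball x r, ∀ z ∈ ball x r,
      ‖fderiv ℝ (fderiv ℝ h) y - fderiv ℝ (fderiv ℝ h) z‖ ≤ L * ‖y - z‖)
    {y : E} (hy : ‖y‖ < r) :
    ‖fderiv ℝ h (x + y) + fderiv ℝ h (x - y) - (2 : ℝ) • fderiv ℝ h x‖ ≤ L * ‖y‖ ^ 2 := by
  have hD2 : ∀ z ∈ ball x r, HasFDerivAt (fderiv ℝ h) (fderiv ℝ (fderiv ℝ h) z) z :=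
    fun z hz => (((hh.fderiv_of_isOpen (m := 1) isOpen_ball (by norm_num)).contDiffAt
      (isOpen_ball.mem_nhds hz)).differentiableAt (by norm_num)).hasFDerivAt
  have hderiv : ∀ z ∈ ball (0 : E) r,
      HasFDerivAt (fun z => fderiv ℝ h (x + z) + fderiv ℝ h (x - z) - (2 : ℝ) • fderiv ℝ h x)
        (fderiv ℝ (fderiv ℝ h) (x + z) - fderiv ℝ (fderiv ℝ h) (x - z)) z := fun z hz => by
    rw [mem_ball_zero_iff] at hz
    refine ((((hD2 _ (add_mem_ball_iff_norm.2 hz)).comp z ((hasFDerivAt_id z).const_add x)).add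
      ((hD2 _ (sub_mem_ball_iff_norm.2 hz)).comp z ((hasFDerivAt_id z).const_sub x))).sub_const
      _).congr_fderiv ?_
    simp [sub_eq_add_neg]
  have hbound : ∀ z ∈ ball (0 : E) r,
      ‖fderiv ℝ (fderiv ℝ h) (x + z) - fderiv ℝ (fderiv ℝ h) (x - z)‖ ≤ 2 * L * ‖z‖ ^ 1 :=
    fun z hz => by
      rw [mem_ball_zero_iff] at hz
      refine (hL _ (add_mem_ball_iff_norm.2 hz) _ (sub_mem_ball_iff_norm.2 hz)).trans_eq ?_
      rw [add_sub_sub_cancel, ← two_smul ℝ z, norm_smul, Real.norm_two]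
      ring
  refine (norm_le_of_norm_fderiv_le_mul_pow ((convex_ball 0 r).starConvex
    (mem_ball_self ((norm_nonneg y).trans_lt hy))) hderiv (by simp [two_smul]) hbound
    (mem_ball_zero_iff.2 hy)).trans_eq ?_
  push_cast
  ring

theorem norm_centered_difference_sub_fderiv_le (hh : ContDiffOn ℝ 2 h (ball x r))
    (hL : ∀ y ∈ ball x r, ∀ z ∈ ball x r,
      ‖fderiv ℝ (fderiv ℝ h) y - fderiv ℝ (fderiv ℝ h) z‖ ≤ L * ‖y - z‖)
    {v : E} (hv : ‖v‖ < r) :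
    ‖(2 : ℝ)⁻¹ • (h (x + v) - h (x - v)) - fderiv ℝ h x v‖ ≤ L * ‖v‖ ^ 3 / 6 := by
  have hD : ∀ z ∈ ball x r, HasFDerivAt h (fderiv ℝ h z) z := fun z hz =>
    ((hh.contDiffAt (isOpen_ball.mem_nhds hz)).differentiableAt (by norm_num)).hasFDerivAt
  set Φ : E → F := fun y => h (x + y) - h (x - y) - (2 : ℝ) • fderiv ℝ h x y
  have hderiv : ∀ y ∈ ball (0 : E) r,
      HasFDerivAt Φ (fderiv ℝ h (x + y) + fderiv ℝ h (x - y) - (2 : ℝ) • fderiv ℝ h x) y :=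
    fun y hy => by
      rw [mem_ball_zero_iff] at hy
      refine ((((hD _ (add_mem_ball_iff_norm.2 hy)).comp y ((hasFDerivAt_id y).const_add x)).sub
        ((hD _ (sub_mem_ball_iff_norm.2 hy)).comp y ((hasFDerivAt_id y).const_sub x))).sub
        ((2 : ℝ) • fderiv ℝ h x).hasFDerivAt).congr_fderiv ?_
      ext
      simp [sub_eq_add_neg]
  have hΦ := norm_le_of_norm_fderiv_le_mul_pow ((convex_ball 0 r).starConvex
    (mem_ball_self ((norm_nonneg v).trans_lt hv))) hderiv (by simp [Φ])
    (fun y hy => norm_fderiv_add_add_fderiv_sub_sub_le hh hL (mem_ball_zero_iff.1 hy))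
    (mem_ball_zero_iff.2 hv)
  have hhalf : (2 : ℝ)⁻¹ • (h (x + v) - h (x - v)) - fderiv ℝ h x v = (2 : ℝ)⁻¹ • Φ v := by
    rw [smul_sub _ _ ((2 : ℝ) • _), smul_smul, inv_mul_cancel₀ two_ne_zero, one_smul]
  rw [hhalf, norm_smul, norm_inv, Real.norm_two]
  push_cast at hΦ
  linarith

theorem abs_centered_difference_sub_fderiv_le [Nontrivial E] {h : E → ℝ} {v : E} {Δ : ℝ}
    (hh : ContDiffOn ℝ 2 h (ball x r))
    (hL : ∀ y ∈ ball x r, ∀ z ∈ ball x r,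
      ‖fderiv ℝ (fderiv ℝ h) y - fderiv ℝ (fderiv ℝ h) z‖ ≤ L * ‖y - z‖)
    (hv : ‖v‖ ≤ Δ) (hΔ : Δ < r) :
    |(h (x + v) - h (x - v)) / 2 - fderiv ℝ h x v| ≤ L * Δ ^ 3 / 6 := by
  have hL₀ : 0 ≤ L := nonneg_of_norm_sub_le_mul_norm_sub (φ := fderiv ℝ (fderiv ℝ h))
    ((norm_nonneg v).trans_lt (hv.trans_lt hΔ)) hL
  have := norm_centered_difference_sub_fderiv_le hh hL (hv.trans_lt hΔ)
  rw [Real.norm_eq_abs, smul_eq_mul, inv_mul_eq_div] at this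
  exact this.trans (by gcongr)

end Calculus

theorem HasFDerivAt.div {𝕜 E : Type*} [NontriviallyNormedField 𝕜] [NormedAddCommGroup E]
    [NormedSpace 𝕜 E] {c d : E → 𝕜} {c' d' : E →L[𝕜] 𝕜} {x : E} (hc : HasFDerivAt c c' x)
    (hd : HasFDerivAt d d' x) (hx : d x ≠ 0) :
    HasFDerivAt (fun y => c y / d y) ((d x ^ 2)⁻¹ • (d x • c' - c x • d')) x := by
  simp only [div_eq_mul_inv]
  refine (hc.mul ((hasDerivAt_inv hx).comp_hasFDerivAt x hd)).congr_fderiv ?_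
  ext v
  simp
  field_simp
  ring

theorem transpose_mulVec_gradient {ι κ : Type*} [Fintype ι] (d : κ → EuclideanSpace ℝ ι)
    (φ : EuclideanSpace ℝ ι → ℝ) (x : EuclideanSpace ℝ ι) :
    (Matrix.of fun j i => d i j)ᵀ *ᵥ WithLp.equiv 2 (ι → ℝ) (gradient φ x) =
      fun i => fderiv ℝ φ x (d i) := by
  funext i
  rw [← inner_gradient_left, PiLp.inner_apply]
  simp [mulVec, dotProduct]

theorem transpose_mulVec_gradient_div {ι κ : Type*} [Fintype ι] (d : κ → EuclideanSpace ℝ ι)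
    {f g : EuclideanSpace ℝ ι → ℝ} {x : EuclideanSpace ℝ ι} (hf : DifferentiableAt ℝ f x)
    (hg : DifferentiableAt ℝ g x) (hx : g x ≠ 0) :
    (Matrix.of fun j i => d i j)ᵀ *ᵥ WithLp.equiv 2 (ι → ℝ) (gradient (fun y => f y / g y) x) =
      fun i => (g x ^ 2)⁻¹ * (g x * fderiv ℝ f x (d i) - f x * fderiv ℝ g x (d i)) := by
  rw [transpose_mulVec_gradient, (hf.hasFDerivAt.div hg.hasFDerivAt hx).fderiv]
  simp

theorem opNorm_smul {a b : ℕ} (c : ℝ) (A : Matrix (Fin a) (Fin b) ℝ) :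
    opNorm (c • A) = |c| * opNorm A := by
  rw [opNorm, opNorm, map_smul, map_smul, norm_smul, Real.norm_eq_abs]

theorem norm_mulVec_le_opNorm_mul {a b : ℕ} (A : Matrix (Fin a) (Fin b) ℝ) (w : Fin b → ℝ) :
    ‖WithLp.toLp 2 (A *ᵥ w)‖ ≤ opNorm A * ‖WithLp.toLp 2 w‖ :=
  (LinearMap.toContinuousLinearMap (Matrix.toEuclideanLin A)).le_opNorm (WithLp.toLp 2 w)

theorem opNorm_of_subsingleton {a b : ℕ} [Subsingleton (EuclideanSpace ℝ (Fin a))]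
    (A : Matrix (Fin a) (Fin b) ℝ) : opNorm A = 0 := by
  rw [opNorm, Subsingleton.elim (LinearMap.toContinuousLinearMap _) 0, norm_zero]

theorem EuclideanSpace.norm_le_sqrt_card_mul {ι : Type*} [Fintype ι] {x : EuclideanSpace ℝ ι}
    {C : ℝ} (hx : ∀ i, |x i| ≤ C) : ‖x‖ ≤ √(Fintype.card ι) * C := by
  rcases isEmpty_or_nonempty ι with hι | ⟨⟨i₀⟩⟩
  · simp [Subsingleton.elim x 0]
  have hC : 0 ≤ C := (abs_nonneg _).trans (hx i₀)
  calc ‖x‖ = √(∑ i, |x i| ^ 2) := by simp [EuclideanSpace.norm_eq]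
    _ ≤ √(∑ _ : ι, C ^ 2) := by gcongr with i; exact hx i
    _ = √(Fintype.card ι) * C := by
      rw [Finset.sum_const, Finset.card_univ, nsmul_eq_mul, Real.sqrt_mul (Nat.cast_nonneg _),
        Real.sqrt_sq hC]

theorem abs_quotient_rule_error_le {a b x y X Y : ℝ} (hb : b ≠ 0) (hx : |x| ≤ X) (hy : |y| ≤ Y) :
    |(b ^ 2)⁻¹ * (b * x - a * y)| ≤ X / |b| + Y * |a| / b ^ 2 := by
  have : (b ^ 2)⁻¹ * (b * x - a * y) = x / b - a * y / b ^ 2 := by field_simp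
  rw [this]
  refine (abs_sub _ _).trans ?_
  rw [abs_div, abs_div, abs_mul, abs_pow, sq_abs, mul_comm Y]
  gcongr

/-- `P` plays the role of `(Sᵀ)†`: `P * Sᵀ` is `Proj_U` and `opNorm (Δ • P)` is `‖(Ŝᵀ)†‖`. -/
theorem gcscg_quotient_error_bound_general {n m : ℕ}
    (f g : EuclideanSpace ℝ (Fin n) → ℝ)
    (x₀ : EuclideanSpace ℝ (Fin n)) (Δbar Lf Lg Δ : ℝ)
    (hf : ContDiffOn ℝ 3 f (ball x₀ Δbar)) (hg : ContDiffOn ℝ 3 g (ball x₀ Δbar))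
    (hLf : ∀ x ∈ ball x₀ Δbar, ∀ y ∈ ball x₀ Δbar,
      ‖fderiv ℝ (fderiv ℝ f) x - fderiv ℝ (fderiv ℝ f) y‖ ≤ Lf * ‖x - y‖)
    (hLg : ∀ x ∈ ball x₀ Δbar, ∀ y ∈ ball x₀ Δbar,
      ‖fderiv ℝ (fderiv ℝ g) x - fderiv ℝ (fderiv ℝ g) y‖ ≤ Lg * ‖x - y‖)
    (hg₀ : g x₀ ≠ 0)
    (d : Fin m → EuclideanSpace ℝ (Fin n))
    (hΔ : ∀ i, ‖d i‖ ≤ Δ) (hΔpos : 0 < Δ) (hΔbar : Δ < Δbar)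
    (S : Matrix (Fin n) (Fin m) ℝ) (hS : S = Matrix.of fun j i => d i j)
    (P : Matrix (Fin n) (Fin m) ℝ) :
    ‖(WithLp.equiv 2 (Fin n → ℝ)).symm fun j =>
        ((g x₀ ^ 2)⁻¹ •
          (g x₀ • P.mulVec (fun i => (f (x₀ + d i) - f (x₀ - d i)) / 2) -
            f x₀ • P.mulVec fun i => (g (x₀ + d i) - g (x₀ - d i)) / 2)) j -
          (P * Sᵀ).mulVec
            (WithLp.equiv 2 (Fin n → ℝ) (gradient (fun y => f y / g y) x₀)) j‖ ≤
      Real.sqrt m / 6 * (Lf / |g x₀| + Lg * |f x₀| / g x₀ ^ 2) *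
        opNorm (Δ • P) * Δ ^ 2 := by
  -- For `n = 0` both sides vanish; otherwise the Lipschitz bounds force `Lf, Lg ≥ 0`.
  rcases subsingleton_or_nontrivial (EuclideanSpace ℝ (Fin n)) with hE | hE
  · rw [norm_of_subsingleton, opNorm_of_subsingleton]
    simp
  have hx₀ : ball x₀ Δbar ∈ nhds x₀ := ball_mem_nhds x₀ (hΔpos.trans hΔbar)
  have hgrad := transpose_mulVec_gradient_div d
    ((hf.contDiffAt hx₀).differentiableAt (by norm_num))
    ((hg.contDiffAt hx₀).differentiableAt (by norm_num)) hg₀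
  rw [← hS] at hgrad
  set w : Fin m → ℝ := fun i => (g x₀ ^ 2)⁻¹ *
    (g x₀ * ((f (x₀ + d i) - f (x₀ - d i)) / 2 - fderiv ℝ f x₀ (d i)) -
      f x₀ * ((g (x₀ + d i) - g (x₀ - d i)) / 2 - fderiv ℝ g x₀ (d i)))
  have hw : ∀ i, |w i| ≤ (Lf / |g x₀| + Lg * |f x₀| / g x₀ ^ 2) * Δ ^ 3 / 6 := fun i =>
    (abs_quotient_rule_error_le hg₀
      (abs_centered_difference_sub_fderiv_le (hf.of_le (by norm_num)) hLf (hΔ i) hΔbar)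
      (abs_centered_difference_sub_fderiv_le (hg.of_le (by norm_num)) hLg (hΔ i) hΔbar)).trans_eq
      (by ring)
  calc _ = ‖WithLp.toLp 2 (P *ᵥ w)‖ := by
        rw [← mulVec_mulVec, hgrad, WithLp.equiv_symm_apply, ← mulVec_smul, ← mulVec_smul,
          ← mulVec_sub, ← mulVec_smul]
        congr 2
        funext j
        rw [← Pi.sub_apply, ← mulVec_sub]
        congr 2
        funext i
        simp only [w, Pi.sub_apply, Pi.smul_apply, smul_eq_mul]
        ring
    _ ≤ opNorm P * ‖WithLp.toLp 2 w‖ := norm_mulVec_le_opNorm_mul P w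
    _ ≤ opNorm P * (Real.sqrt m * ((Lf / |g x₀| + Lg * |f x₀| / g x₀ ^ 2) * Δ ^ 3 / 6)) :=
        mul_le_mul_of_nonneg_left
          (by simpa using EuclideanSpace.norm_le_sqrt_card_mul (x := WithLp.toLp 2 w) hw)
          (norm_nonneg _)
    _ = _ := by
        rw [opNorm_smul, abs_of_pos hΔpos]
        ring

/-- Error bound for the GCSCG quotient approximation
`∇ᶜᶜ(f/g)(X) = (g(x⁰)∇ᶜf(X) − f(x⁰)∇ᶜg(X))/g(x⁰)²`:
`‖∇ᶜᶜ(f/g)(X) − ∇(f/g)_U(x⁰)‖ ≤ (√m/6)(L_f/|g(x⁰)| + L_g|f(x⁰)|/g(x⁰)²)‖(Ŝᵀ)†‖Δ²`,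
where `∇(f/g)_U(x⁰) = Proj_U ∇(f/g)(x⁰)` with `Proj_U = (Sᵀ)†Sᵀ`. -/
theorem gcscg_quotient_error_bound {n m : ℕ}
    (f g : EuclideanSpace ℝ (Fin n) → ℝ)
    (x₀ : EuclideanSpace ℝ (Fin n)) (Δbar Lf Lg Δ : ℝ)
    (hf : ContDiffOn ℝ 3 f (ball x₀ Δbar)) (hg : ContDiffOn ℝ 3 g (ball x₀ Δbar))
    (hLf : ∀ x ∈ ball x₀ Δbar, ∀ y ∈ ball x₀ Δbar,
      ‖fderiv ℝ (fderiv ℝ f) x - fderiv ℝ (fderiv ℝ f) y‖ ≤ Lf * ‖x - y‖)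
    (hLg : ∀ x ∈ ball x₀ Δbar, ∀ y ∈ ball x₀ Δbar,
      ‖fderiv ℝ (fderiv ℝ g) x - fderiv ℝ (fderiv ℝ g) y‖ ≤ Lg * ‖x - y‖)
    (hg₀ : g x₀ ≠ 0)
    (d : Fin m → EuclideanSpace ℝ (Fin n))
    (hΔ : ∀ i, ‖d i‖ ≤ Δ) (hΔpos : 0 < Δ) (hΔbar : Δ < Δbar)
    (S : Matrix (Fin n) (Fin m) ℝ) (hS : S = Matrix.of fun j i => d i j)
    (hrank : S.rank = m ∨ S.rank = n)
    (P : Matrix (Fin n) (Fin m) ℝ) (hP : IsMPInv Sᵀ P) :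
    ‖(WithLp.equiv 2 (Fin n → ℝ)).symm fun j =>
        ((g x₀ ^ 2)⁻¹ •
          (g x₀ • P.mulVec (fun i => (f (x₀ + d i) - f (x₀ - d i)) / 2) -
            f x₀ • P.mulVec fun i => (g (x₀ + d i) - g (x₀ - d i)) / 2)) j -
          (P * Sᵀ).mulVec
            (WithLp.equiv 2 (Fin n → ℝ) (gradient (fun y => f y / g y) x₀)) j‖ ≤
      Real.sqrt m / 6 * (Lf / |g x₀| + Lg * |f x₀| / g x₀ ^ 2) *
        opNorm (Δ • P) * Δ ^ 2 :=
  gcscg_quotient_error_bound_general f g x₀ Δbar Lf Lg Δ hf hg hLf hLg hg₀ d hΔ hΔpos hΔbar S hS P
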